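/- There exists a constant c > 1 depending only on d and α such that for all r ∈ [1, ∞), c^{-1} e^{−r} r^{(d+α−1)/2} ≤ ψ(r) ≤ c e^{−r} r^{(d+α−1)/2}. -/

import Mathlib

open MeasureTheory Real Set

/-- `ψ(r) = 2^{-(d+α)} Γ((d+α)/2)^{-1} ∫_0^∞ s^{(d+α)/2-1} e^{-s/4 - r²/s} ds`. -/
noncomputable def psi (d : ℕ) (α r : ℝ) : ℝ :=
  2 ^ (-((d : ℝ) + α)) * (Real.Gamma (((d : ℝ) + α) / 2))⁻¹ *
    ∫ s in Set.Ioi (0 : ℝ), s ^ (((d : ℝ) + α) / 2 - 1) * Real.exp (-(s / 4) - r ^ 2 / s)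

/-- `ξ(r) = r²` if `d + α > 2`; `ξ(r) = r^{1+α}` if `d = 1 > α`;
`ξ(r) = r² ln(1/r)` if `d = 1 = α` (for `1 ≤ d` and `α ∈ (0,2)` these cover all cases). -/
noncomputable def xi (d : ℕ) (α r : ℝ) : ℝ :=
  if 2 < (d : ℝ) + α then r ^ 2
  else if α < 1 then r ^ (1 + α)
  else r ^ 2 * Real.log (1 / r)

/-!
With `ν = (d + α) / 2`, the integral in `ψ` is `2 (2r)^ν K_ν(r)`, and the completed square
`-s/4 - r²/s = -r - (s - 2r)² / (4s)` shows that its integrand is `e^{-r} s^{ν-1}` times a bump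
of width `√r` around `s = 2r`. On the window `(2r, 2r + √r]` the bump is at least `e^{-1/8}`,
which gives the lower bound. For the upper bound the bump is at most the Gaussian
`exp (-(s - 2r)² / (16 r))` on `(r, 4r]`, of total mass `√(16 π r)`, and at most `e^{-s/16}`
elsewhere, which contributes only `16^ν Γ(ν) e^{-r}`.
-/

lemma integrableOn_rpow_sub_one_mul_exp_neg_mul {ν b : ℝ} (hν : 0 < ν) (hb : 0 < b) :
    IntegrableOn (fun s : ℝ => s ^ (ν - 1) * exp (-(b * s))) (Ioi 0) := by
  simpa only [rpow_one, neg_mul] using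
    integrableOn_rpow_mul_exp_neg_mul_rpow (by linarith : -1 < ν - 1) one_pos hb

lemma rpow_le_pow_abs_mul_rpow {r s k : ℝ} (p : ℝ) (hr : 0 < r) (hrs : r ≤ s) (hsk : s ≤ k * r) :
    s ^ p ≤ k ^ |p| * r ^ p := by
  have hk : 1 ≤ k := by nlinarith
  rcases le_or_gt 0 p with hp | hp
  · calc s ^ p ≤ (k * r) ^ p := rpow_le_rpow (by linarith) hsk hp
      _ = k ^ |p| * r ^ p := by rw [abs_of_nonneg hp, mul_rpow (by linarith) hr.le]
  · calc s ^ p ≤ r ^ p := rpow_le_rpow_of_nonpos hr hrs hp.le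
      _ ≤ k ^ |p| * r ^ p :=
        le_mul_of_one_le_left (rpow_nonneg hr.le p) (one_le_rpow hk (abs_nonneg p))

lemma rpow_neg_abs_mul_rpow_le {r s k : ℝ} (p : ℝ) (hr : 0 < r) (hrs : r ≤ s) (hsk : s ≤ k * r) :
    k ^ (-|p|) * r ^ p ≤ s ^ p := by
  have hk : 0 < k := by nlinarith
  have h := rpow_le_pow_abs_mul_rpow (-p) hr hrs hsk
  rw [abs_neg, rpow_neg (hr.le.trans hrs), rpow_neg hr.le] at h
  have hs := rpow_pos_of_pos (hr.trans_le hrs) p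
  have hkr := mul_pos (inv_pos.2 (rpow_pos_of_pos hk |p|)) (rpow_pos_of_pos hr p)
  rwa [rpow_neg hk.le, ← inv_le_inv₀ hs hkr, mul_inv, inv_inv]

noncomputable def psiIntegrand (ν r s : ℝ) : ℝ := s ^ (ν - 1) * exp (-(s / 4) - r ^ 2 / s)

lemma neg_div_four_sub_sq_div {s : ℝ} (hs : s ≠ 0) (r : ℝ) :
    -(s / 4) - r ^ 2 / s = -r - (s - 2 * r) ^ 2 / (4 * s) := by
  field_simp
  ring

lemma psiIntegrand_nonneg (ν r : ℝ) {s : ℝ} (hs : 0 ≤ s) : 0 ≤ psiIntegrand ν r s := by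
  unfold psiIntegrand
  positivity

lemma integrableOn_psiIntegrand {ν : ℝ} (hν : 0 < ν) (r : ℝ) :
    IntegrableOn (psiIntegrand ν r) (Ioi 0) := by
  refine (integrableOn_rpow_sub_one_mul_exp_neg_mul hν (by norm_num : (0 : ℝ) < 4⁻¹)).mono'
    (by unfold psiIntegrand; fun_prop) ?_
  refine (ae_restrict_iff' measurableSet_Ioi).2 (ae_of_all _ fun s (hs : 0 < s) => ?_)
  rw [norm_of_nonneg (psiIntegrand_nonneg ν r hs.le)]
  refine mul_le_mul_of_nonneg_left (exp_le_exp.2 ?_) (rpow_nonneg hs.le _)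
  have : 0 ≤ r ^ 2 / s := by positivity
  linarith

lemma psiIntegrand_ge_of_mem_Ioc {ν r s : ℝ} (hr : 1 ≤ r) (hs : s ∈ Ioc (2 * r) (2 * r + √r)) :
    3 ^ (-|ν - 1|) * exp (-(1 / 8)) * (exp (-r) * r ^ (ν - 1)) ≤ psiIntegrand ν r s := by
  obtain ⟨hs₁, hs₂⟩ := hs
  have hr₀ : 0 < r := by linarith
  have hsqrt : √r ≤ r := sqrt_le_self_iff.2 (Or.inr hr)
  have hpow : 3 ^ (-|ν - 1|) * r ^ (ν - 1) ≤ s ^ (ν - 1) :=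
    rpow_neg_abs_mul_rpow_le _ hr₀ (by linarith) (by linarith)
  have hgap : (s - 2 * r) ^ 2 / (4 * s) ≤ 1 / 8 := by
    have : (s - 2 * r) ^ 2 ≤ r := by nlinarith [sq_sqrt hr₀.le]
    rw [div_le_div_iff₀ (by linarith) (by norm_num)]
    linarith
  have hexp : exp (-r) * exp (-(1 / 8)) ≤ exp (-(s / 4) - r ^ 2 / s) := by
    rw [neg_div_four_sub_sq_div (by linarith) r, ← exp_add, exp_le_exp]
    linarith
  calc 3 ^ (-|ν - 1|) * exp (-(1 / 8)) * (exp (-r) * r ^ (ν - 1))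
      = 3 ^ (-|ν - 1|) * r ^ (ν - 1) * (exp (-r) * exp (-(1 / 8))) := by ring
    _ ≤ psiIntegrand ν r s := mul_le_mul hpow hexp (by positivity) (rpow_nonneg (by linarith) _)

lemma le_integral_psiIntegrand {ν r : ℝ} (hν : 0 < ν) (hr : 1 ≤ r) :
    3 ^ (-|ν - 1|) * exp (-(1 / 8)) * (exp (-r) * r ^ (ν - 1 / 2)) ≤
      ∫ s in Ioi 0, psiIntegrand ν r s := by
  have hr₀ : 0 < r := by linarith
  have hwindow : Ioc (2 * r) (2 * r + √r) ⊆ Ioi 0 := fun s hs => by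
    have := hs.1; simp only [mem_Ioi]; linarith
  have hlength : volume.real (Ioc (2 * r) (2 * r + √r)) = r ^ (1 / 2 : ℝ) := by
    rw [volume_real_Ioc_of_le (le_add_of_nonneg_right (sqrt_nonneg r)), add_sub_cancel_left,
      sqrt_eq_rpow]
  calc 3 ^ (-|ν - 1|) * exp (-(1 / 8)) * (exp (-r) * r ^ (ν - 1 / 2))
      = 3 ^ (-|ν - 1|) * exp (-(1 / 8)) * (exp (-r) * r ^ (ν - 1)) *
          volume.real (Ioc (2 * r) (2 * r + √r)) := by
        rw [hlength, show ν - 1 / 2 = ν - 1 + 1 / 2 by ring, rpow_add hr₀]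
        ring
    _ ≤ ∫ s in Ioc (2 * r) (2 * r + √r), psiIntegrand ν r s :=
        setIntegral_ge_of_const_le_real measurableSet_Ioc measure_Ioc_lt_top.ne
          (fun s hs => psiIntegrand_ge_of_mem_Ioc hr hs)
          ((integrableOn_psiIntegrand hν r).mono_set hwindow)
    _ ≤ ∫ s in Ioi 0, psiIntegrand ν r s :=
        setIntegral_mono_set (integrableOn_psiIntegrand hν r)
          ((ae_restrict_iff' measurableSet_Ioi).2
            (ae_of_all _ fun s hs => psiIntegrand_nonneg ν r (le_of_lt hs)))
          hwindow.eventuallyLE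

lemma div_sixteen_le_sq_sub_div {r s : ℝ} (hs : 0 < s) (h : s ∉ Ioc r (4 * r)) :
    s / 16 ≤ (s - 2 * r) ^ 2 / (4 * s) := by
  rw [div_le_div_iff₀ (by norm_num) (by positivity)]
  rcases not_and_or.1 h with hsr | hsr
  · nlinarith
  · nlinarith

lemma psiIntegrand_le {ν r s : ℝ} (hr : 0 < r) (hs : 0 < s) :
    psiIntegrand ν r s ≤ exp (-r) *
      (4 ^ |ν - 1| * r ^ (ν - 1) * exp (-(16 * r)⁻¹ * (s - 2 * r) ^ 2)
        + s ^ (ν - 1) * exp (-(16⁻¹ * s))) := by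
  have hgauss : 0 ≤ 4 ^ |ν - 1| * r ^ (ν - 1) * exp (-(16 * r)⁻¹ * (s - 2 * r) ^ 2) := by
    positivity
  have htail : 0 ≤ s ^ (ν - 1) * exp (-(16⁻¹ * s)) := by positivity
  unfold psiIntegrand
  rw [neg_div_four_sub_sq_div hs.ne' r, sub_eq_add_neg (-r), exp_add]
  by_cases hmem : s ∈ Ioc r (4 * r)
  · have hpow : s ^ (ν - 1) ≤ 4 ^ |ν - 1| * r ^ (ν - 1) :=
      rpow_le_pow_abs_mul_rpow _ hr hmem.1.le hmem.2
    have hexp : exp (-((s - 2 * r) ^ 2 / (4 * s))) ≤ exp (-(16 * r)⁻¹ * (s - 2 * r) ^ 2) := by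
      rw [exp_le_exp, neg_mul, neg_le_neg_iff, inv_mul_eq_div]
      exact div_le_div_of_nonneg_left (sq_nonneg _) (by linarith) (by linarith [hmem.2])
    calc s ^ (ν - 1) * (exp (-r) * exp (-((s - 2 * r) ^ 2 / (4 * s))))
        ≤ exp (-r) * (4 ^ |ν - 1| * r ^ (ν - 1) * exp (-(16 * r)⁻¹ * (s - 2 * r) ^ 2)) := by
          rw [mul_left_comm]
          exact mul_le_mul_of_nonneg_left (mul_le_mul hpow hexp (by positivity) (by positivity))
            (exp_pos _).le
      _ ≤ _ := by gcongr; linarith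
  · have hexp : exp (-((s - 2 * r) ^ 2 / (4 * s))) ≤ exp (-(16⁻¹ * s)) := by
      rw [exp_le_exp, neg_le_neg_iff, inv_mul_eq_div]
      exact div_sixteen_le_sq_sub_div hs hmem
    calc s ^ (ν - 1) * (exp (-r) * exp (-((s - 2 * r) ^ 2 / (4 * s))))
        ≤ exp (-r) * (s ^ (ν - 1) * exp (-(16⁻¹ * s))) := by
          rw [mul_left_comm]
          gcongr
      _ ≤ _ := by gcongr; linarith

lemma integral_psiIntegrand_le {ν r : ℝ} (hν : 1 / 2 ≤ ν) (hr : 1 ≤ r) :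
    ∫ s in Ioi 0, psiIntegrand ν r s ≤
      (4 ^ |ν - 1| * √(16 * π) + 16 ^ ν * Gamma ν) * (exp (-r) * r ^ (ν - 1 / 2)) := by
  have hν₀ : 0 < ν := by linarith
  have hr₀ : 0 < r := by linarith
  set M := 4 ^ |ν - 1| * r ^ (ν - 1)
  have hgauss : Integrable fun s : ℝ => exp (-(16 * r)⁻¹ * (s - 2 * r) ^ 2) :=
    (integrable_exp_neg_mul_sq (by positivity)).comp_sub_right (2 * r)
  have hgauss_int : ∫ s, exp (-(16 * r)⁻¹ * (s - 2 * r) ^ 2) = √(16 * π) * r ^ (1 / 2 : ℝ) := by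
    rw [integral_sub_right_eq_self (fun u => exp (-(16 * r)⁻¹ * u ^ 2)), integral_gaussian,
      div_inv_eq_mul, ← mul_assoc, mul_comm π, sqrt_mul (by positivity), sqrt_eq_rpow r]
  have htail := integrableOn_rpow_sub_one_mul_exp_neg_mul hν₀ (by norm_num : (0 : ℝ) < 16⁻¹)
  have htail_int : ∫ s in Ioi 0, s ^ (ν - 1) * exp (-(16⁻¹ * s)) = 16 ^ ν * Gamma ν := by
    rw [integral_rpow_mul_exp_neg_mul_Ioi hν₀ (by norm_num), one_div, inv_inv]
  have hgauss_le : ∫ s in Ioi 0, exp (-(16 * r)⁻¹ * (s - 2 * r) ^ 2) ≤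
      √(16 * π) * r ^ (1 / 2 : ℝ) :=
    hgauss_int ▸ setIntegral_le_integral hgauss (ae_of_all _ fun s => (exp_pos _).le)
  have hone : 1 ≤ r ^ (ν - 1 / 2) := one_le_rpow hr (by linarith)
  calc ∫ s in Ioi 0, psiIntegrand ν r s
      ≤ ∫ s in Ioi 0, exp (-r) * (M * exp (-(16 * r)⁻¹ * (s - 2 * r) ^ 2)
          + s ^ (ν - 1) * exp (-(16⁻¹ * s))) :=
        setIntegral_mono_on (integrableOn_psiIntegrand hν₀ r)
          (((hgauss.integrableOn.const_mul M).add htail).const_mul _) measurableSet_Ioi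
          fun s hs => psiIntegrand_le hr₀ hs
    _ = exp (-r) * (M * (∫ s in Ioi 0, exp (-(16 * r)⁻¹ * (s - 2 * r) ^ 2))
          + 16 ^ ν * Gamma ν) := by
        rw [integral_const_mul, integral_add (hgauss.integrableOn.const_mul M) htail,
          integral_const_mul, htail_int]
    _ ≤ exp (-r) * (M * (√(16 * π) * r ^ (1 / 2 : ℝ))
          + 16 ^ ν * Gamma ν * r ^ (ν - 1 / 2)) := by
        have := Gamma_pos_of_pos hν₀
        gcongr exp (-r) * (M * ?_ + ?_)
        exact le_mul_of_one_le_right (by positivity) hone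
    _ = (4 ^ |ν - 1| * √(16 * π) + 16 ^ ν * Gamma ν) * (exp (-r) * r ^ (ν - 1 / 2)) := by
        rw [show ν - 1 / 2 = ν - 1 + 1 / 2 by ring, rpow_add hr₀]
        ring

lemma exists_one_lt_inv_mul_le_and_le_mul {X : Type*} {S : Set X} {f g : X → ℝ} {a b : ℝ}
    (ha : 0 < a) (hg : ∀ x ∈ S, 0 ≤ g x) (hlower : ∀ x ∈ S, a * g x ≤ f x)
    (hupper : ∀ x ∈ S, f x ≤ b * g x) :
    ∃ c : ℝ, 1 < c ∧ ∀ x ∈ S, c⁻¹ * g x ≤ f x ∧ f x ≤ c * g x := by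
  set c := max a⁻¹ b + 1
  have hac : a⁻¹ < c := by linarith [le_max_left a⁻¹ b]
  have hbc : b < c := by linarith [le_max_right a⁻¹ b]
  have hc : 0 < c := (inv_pos.2 ha).trans hac
  refine ⟨c, by linarith [le_max_left a⁻¹ b, inv_pos.2 ha], fun x hx => ⟨?_, ?_⟩⟩
  · exact le_trans (mul_le_mul_of_nonneg_right ((inv_le_comm₀ ha hc).1 hac.le) (hg x hx))
      (hlower x hx)
  · exact (hupper x hx).trans (mul_le_mul_of_nonneg_right hbc.le (hg x hx))

/-- There is `c = c(d,α) > 1` with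
`c⁻¹ e^{-r} r^{(d+α-1)/2} ≤ ψ(r) ≤ c e^{-r} r^{(d+α-1)/2}` for all `r ≥ 1`. -/
theorem psi_asymptotics (d : ℕ) (hd : 1 ≤ d) (α : ℝ) (hα : α ∈ Set.Ioo (0:ℝ) 2) :
    ∃ c : ℝ, 1 < c ∧ ∀ r : ℝ, 1 ≤ r →
      c⁻¹ * Real.exp (-r) * r ^ (((d : ℝ) + α - 1) / 2) ≤ psi d α r ∧
      psi d α r ≤ c * Real.exp (-r) * r ^ (((d : ℝ) + α - 1) / 2) := by
  have hν : 1 / 2 ≤ ((d : ℝ) + α) / 2 := by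
    have : (1 : ℝ) ≤ d := by exact_mod_cast hd
    linarith [hα.1]
  set ν := ((d : ℝ) + α) / 2
  have hν₀ : 0 < ν := by linarith
  set A := 2 ^ (-((d : ℝ) + α)) * (Gamma ν)⁻¹
  have hA : 0 < A := by have := Gamma_pos_of_pos hν₀; positivity
  have hpsi (r : ℝ) : psi d α r = A * ∫ s in Ioi 0, psiIntegrand ν r s := rfl
  obtain ⟨c, hc, hbounds⟩ := exists_one_lt_inv_mul_le_and_le_mul (S := Ici 1)
    (f := psi d α) (g := fun r => exp (-r) * r ^ (ν - 1 / 2))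
    (a := A * (3 ^ (-|ν - 1|) * exp (-(1 / 8))))
    (b := A * (4 ^ |ν - 1| * √(16 * π) + 16 ^ ν * Gamma ν)) (by positivity)
    (fun r hr => mul_nonneg (exp_pos _).le (rpow_nonneg (zero_le_one.trans hr) _))
    (fun r hr => by
      rw [hpsi, mul_assoc A]
      exact mul_le_mul_of_nonneg_left (le_integral_psiIntegrand hν₀ hr) hA.le)
    (fun r hr => by
      rw [hpsi, mul_assoc A]
      exact mul_le_mul_of_nonneg_left (integral_psiIntegrand_le hν hr) hA.le)
  refine ⟨c, hc, fun r hr => ?_⟩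
  rw [show ((d : ℝ) + α - 1) / 2 = ν - 1 / 2 by ring, mul_assoc, mul_assoc]
  exact hbounds r hr
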